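/- Let d ≥ 1, let γ = (γ_1,…,γ_d) be a vector of positive real numbers, and for n ∈ ℕ let Δ_n(γ) := {m ∈ ℕ^d | m·γ < n+1}. Then mean(Δ_n(γ)·γ) ≤ (d/(d+1))·max(Δ_n(γ)·γ) < (n+1)·d/(d+1). -/

import Mathlib

/-- The weight of `m ∈ ℕ^d` with respect to the weight vector `γ`. -/
noncomputable def weight (d : ℕ) (γ : Fin d → ℝ) (m : Fin d → ℕ) : ℝ :=
  ∑ i, (m i : ℝ) * γ i

/-- `Δ_n(γ) = {m ∈ ℕ^d | m·γ < n+1}`. -/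
def Delta (d : ℕ) (γ : Fin d → ℝ) (n : ℕ) : Set (Fin d → ℕ) :=
  {m | weight d γ m < n + 1}

/-- The mean weight of a (finite) subset of `ℕ^d`. -/
noncomputable def meanWeight (d : ℕ) (γ : Fin d → ℝ) (B : Set (Fin d → ℕ)) : ℝ :=
  (B.ncard : ℝ)⁻¹ * ∑ᶠ b ∈ B, weight d γ b

/-- The maximal weight of an element of a subset of `ℕ^d`. -/
noncomputable def maxWeight (d : ℕ) (γ : Fin d → ℝ) (B : Set (Fin d → ℕ)) : ℝ :=
  sSup (weight d γ '' B)

/-!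
Fix a coordinate `i`. In a finite lower set `S ⊆ ℕ^d`, every line parallel to the `i`-th axis
meets `S` in an initial segment `{0, …, t}`, and reflecting `m_i ↦ t - m_i` is an involution of `S`.
A pair `m, m'` swapped by it satisfies `(w m + m_i γ_i) + (w m' + m'_i γ_i) = 2 w(m with m_i := t)`,
so `∑_{m ∈ S} (w m + m_i γ_i) ≤ #S · max w`. Summing over the `d` coordinates gives
`(d + 1) ∑_{m ∈ S} w m ≤ d · #S · max w`, which is the first inequality; the second holds because
every element of `Δ_n(γ)` has weight `< n + 1`.
-/

open Finset Function

section Weight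

variable {d : ℕ} {γ : Fin d → ℝ}

lemma weight_update (m : Fin d → ℕ) (i : Fin d) (k : ℕ) :
    weight d γ (update m i k) = weight d γ m + ((k : ℝ) - m i) * γ i := by
  unfold weight
  rw [← add_sum_erase _ _ (mem_univ i), ← add_sum_erase _ _ (mem_univ i), update_self]
  have hrest : ∀ j ∈ univ.erase i, (update m i k j : ℝ) * γ j = (m j : ℝ) * γ j := fun j hj => by
    rw [update_of_ne (mem_erase.1 hj).1]
  rw [sum_congr rfl hrest]
  ring

lemma weight_mono (hγ : ∀ i, 0 ≤ γ i) : Monotone (weight d γ) := fun _ _ h =>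
  sum_le_sum fun i _ => mul_le_mul_of_nonneg_right (by exact_mod_cast h i) (hγ i)

lemma sum_weight_add_coord (m : Fin d → ℕ) :
    ∑ i, (weight d γ m + (m i : ℝ) * γ i) = (d + 1) * weight d γ m := by
  rw [sum_add_distrib, sum_const, card_univ, Fintype.card_fin, nsmul_eq_mul]
  change _ + weight d γ m = _
  ring

end Weight

section LowerSet

variable {d : ℕ} {S : Finset (Fin d → ℕ)} {i : Fin d} {m : Fin d → ℕ}

def lineTop (S : Finset (Fin d → ℕ)) (i : Fin d) (m : Fin d → ℕ) : ℕ :=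
  Nat.findGreatest (fun k => update m i k ∈ S) (S.sup (· i))

lemma le_lineTop_of_update_mem {k : ℕ} (hk : update m i k ∈ S) : k ≤ lineTop S i m := by
  refine Nat.le_findGreatest ?_ hk
  simpa using le_sup (f := (· i)) hk

lemma le_lineTop (hm : m ∈ S) : m i ≤ lineTop S i m :=
  le_lineTop_of_update_mem (by rwa [update_eq_self])

lemma update_lineTop_mem (hm : m ∈ S) : update m i (lineTop S i m) ∈ S :=
  Nat.findGreatest_spec (P := fun k => update m i k ∈ S)
    (by simpa using le_sup (f := (· i)) hm) (by rwa [update_eq_self])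

lemma lineTop_update (k : ℕ) : lineTop S i (update m i k) = lineTop S i m := by
  simp only [lineTop, update_idem]

def lineReflect (S : Finset (Fin d → ℕ)) (i : Fin d) (m : Fin d → ℕ) : Fin d → ℕ :=
  update m i (lineTop S i m - m i)

lemma lineReflect_mem (hS : IsLowerSet (S : Set (Fin d → ℕ))) (hm : m ∈ S) :
    lineReflect S i m ∈ S := by
  refine hS (fun j => ?_) (update_lineTop_mem (i := i) hm)
  rcases eq_or_ne j i with rfl | hj
  · simp [lineReflect]
  · simp [lineReflect, update_of_ne hj]

lemma lineReflect_lineReflect (hm : m ∈ S) : lineReflect S i (lineReflect S i m) = m := by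
  have hle := le_lineTop (i := i) hm
  simp only [lineReflect, lineTop_update, update_self, update_idem]
  rw [Nat.sub_sub_self hle, update_eq_self]

variable {γ : Fin d → ℝ}

lemma weight_add_coord_add_lineReflect (hm : m ∈ S) :
    (weight d γ m + (m i : ℝ) * γ i) +
        (weight d γ (lineReflect S i m) + (lineReflect S i m i : ℝ) * γ i) =
      2 * weight d γ (update m i (lineTop S i m)) := by
  simp only [lineReflect, weight_update, update_self, Nat.cast_sub (le_lineTop (i := i) hm)]
  ring

lemma sum_weight_add_coord_le (hS : IsLowerSet (S : Set (Fin d → ℕ))) {M : ℝ}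
    (hM : ∀ m ∈ S, weight d γ m ≤ M) (i : Fin d) :
    ∑ m ∈ S, (weight d γ m + (m i : ℝ) * γ i) ≤ #S * M := by
  set f : (Fin d → ℕ) → ℝ := fun m => weight d γ m + (m i : ℝ) * γ i
  have hinv : ∑ m ∈ S, f m = ∑ m ∈ S, f (lineReflect S i m) :=
    sum_nbij' (lineReflect S i) (lineReflect S i) (fun _ => lineReflect_mem hS)
      (fun _ => lineReflect_mem hS) (fun _ => lineReflect_lineReflect)
      (fun _ => lineReflect_lineReflect) (fun _ hm => by rw [lineReflect_lineReflect hm])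
  have hpair : ∑ m ∈ S, (f m + f (lineReflect S i m)) ≤ ∑ _m ∈ S, 2 * M :=
    sum_le_sum fun m hm => by
      rw [weight_add_coord_add_lineReflect hm]
      linarith [hM _ (update_lineTop_mem (i := i) hm)]
  rw [sum_add_distrib, ← hinv, sum_const, nsmul_eq_mul] at hpair
  linarith

lemma sum_weight_le (hS : IsLowerSet (S : Set (Fin d → ℕ))) {M : ℝ}
    (hM : ∀ m ∈ S, weight d γ m ≤ M) :
    (d + 1) * ∑ m ∈ S, weight d γ m ≤ d * (#S * M) :=
  calc (d + 1) * ∑ m ∈ S, weight d γ m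
      = ∑ i, ∑ m ∈ S, (weight d γ m + (m i : ℝ) * γ i) := by
        rw [sum_comm, mul_sum]
        exact sum_congr rfl fun m _ => (sum_weight_add_coord m).symm
    _ ≤ ∑ _i : Fin d, #S * M := sum_le_sum fun i _ => sum_weight_add_coord_le hS hM i
    _ = d * (#S * M) := by simp

end LowerSet

section MeanMax

variable {d : ℕ} {γ : Fin d → ℝ} {B : Set (Fin d → ℕ)}

lemma le_maxWeight (hB : B.Finite) {m : Fin d → ℕ} (hm : m ∈ B) :
    weight d γ m ≤ maxWeight d γ B :=
  le_csSup (hB.image _).bddAbove ⟨m, hm, rfl⟩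

lemma exists_weight_eq_maxWeight (hB : B.Finite) (hne : B.Nonempty) :
    ∃ m ∈ B, weight d γ m = maxWeight d γ B :=
  (hne.image _).csSup_mem (hB.image _)

theorem meanWeight_le_of_isLowerSet (hB : B.Finite) (hne : B.Nonempty) (hlow : IsLowerSet B) :
    meanWeight d γ B ≤ d / (d + 1) * maxWeight d γ B := by
  obtain ⟨S, rfl⟩ := hB.exists_finset_coe
  have hcard : (0 : ℝ) < #S := by exact_mod_cast (coe_nonempty.1 hne).card_pos
  have hsum := sum_weight_le hlow fun m hm => le_maxWeight (γ := γ) hB (mem_coe.2 hm)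
  rw [meanWeight, Set.ncard_coe_finset, finsum_mem_coe_finset, inv_mul_le_iff₀ hcard,
    div_mul_eq_mul_div, mul_div_assoc', le_div_iff₀ (by positivity)]
  linarith

end MeanMax

section Delta

variable {d : ℕ} {γ : Fin d → ℝ}

lemma zero_mem_delta (n : ℕ) : (0 : Fin d → ℕ) ∈ Delta d γ n := by
  simp only [Delta, weight, Set.mem_ofPred_eq, Pi.zero_apply, Nat.cast_zero, zero_mul,
    sum_const_zero]
  positivity

lemma isLowerSet_delta (hγ : ∀ i, 0 ≤ γ i) (n : ℕ) : IsLowerSet (Delta d γ n) :=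
  fun _ _ h hm => (weight_mono hγ h).trans_lt hm

lemma delta_finite (hγ : ∀ i, 0 < γ i) (n : ℕ) : (Delta d γ n).Finite := by
  refine (Set.finite_Icc 0 fun i => ⌈((n : ℝ) + 1) / γ i⌉₊).subset fun m hm =>
    ⟨fun _ => Nat.zero_le _, fun i => ?_⟩
  have hcoord : (m i : ℝ) * γ i ≤ weight d γ m :=
    single_le_sum (f := fun j => (m j : ℝ) * γ j)
      (fun j _ => mul_nonneg (Nat.cast_nonneg _) (hγ j).le) (mem_univ i)
  have hlt : (m i : ℝ) < ((n : ℝ) + 1) / γ i := by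
    rw [lt_div_iff₀ (hγ i)]
    exact hcoord.trans_lt hm
  exact_mod_cast hlt.le.trans (Nat.le_ceil _)

lemma maxWeight_delta_lt (hγ : ∀ i, 0 < γ i) (n : ℕ) : maxWeight d γ (Delta d γ n) < n + 1 := by
  obtain ⟨m, hm, hmax⟩ := exists_weight_eq_maxWeight (delta_finite hγ n) ⟨0, zero_mem_delta n⟩
  exact hmax ▸ hm

end Delta

theorem stmt_1 (d : ℕ) (hd : 1 ≤ d) (γ : Fin d → ℝ) (hγ : ∀ i, 0 < γ i) (n : ℕ) :
    meanWeight d γ (Delta d γ n) ≤ (d / (d + 1)) * maxWeight d γ (Delta d γ n) ∧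
      (d / (d + 1)) * maxWeight d γ (Delta d γ n) < (n + 1) * (d / (d + 1)) := by
  have hpos : (0 : ℝ) < d / (d + 1) := by
    have : (0 : ℝ) < d := by exact_mod_cast hd
    positivity
  refine ⟨meanWeight_le_of_isLowerSet (delta_finite hγ n) ⟨0, zero_mem_delta n⟩
    (isLowerSet_delta (fun i => (hγ i).le) n), ?_⟩
  rw [mul_comm]
  exact mul_lt_mul_of_pos_right (maxWeight_delta_lt hγ n) hpos
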